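/- arXiv:1312.0669 — 2 statements merged into one kernel-verified Lean document; each statement's English description precedes it below -/
import Mathlib

section
/- Let f : ℝ → ℝ be a perfect mapping and let (J₀, J₁, …, J_{n-1}) be a chain of intervals on ℝ, i.e., each J_i is a nonempty interval and J_i ⊆ f(J_{i-1}) for all 1 ≤ i ≤ n−1. Then there exists a nonempty interval K ⊆ J₀ such that f^{n-1}(K) = J_{n-1} and fⁱ(K) ⊆ J_i for all 0 ≤ i ≤ n−1. -/
open Set Filter Topology ENNReal

section Defs

variable {X Y : Type*}

/-- An open set with compact complement. -/
def IsCoCompactOpen [TopologicalSpace X] (U : Set X) : Prop :=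
  IsOpen U ∧ IsCompact Uᶜ

/-- A co-compact open cover: every member is co-compact open, and the family covers `X`. -/
def IsCoCompactCover [TopologicalSpace X] (𝒰 : Set (Set X)) : Prop :=
  (∀ U ∈ 𝒰, IsCoCompactOpen U) ∧ ⋃₀ 𝒰 = Set.univ

/-- A perfect map: continuous, closed, with compact fibers. -/
def IsPerfectMap [TopologicalSpace X] [TopologicalSpace Y] (f : X → Y) : Prop :=
  Continuous f ∧ IsClosedMap f ∧ ∀ y : Y, IsCompact (f ⁻¹' {y})

/-- `coverN 𝒰` : the minimal cardinality of a finite subcover of `𝒰`. -/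
noncomputable def coverN (𝒰 : Set (Set X)) : ℕ :=
  sInf {n | ∃ 𝒱 : Finset (Set X), ↑𝒱 ⊆ 𝒰 ∧ ⋃₀ (𝒱 : Set (Set X)) = Set.univ ∧ 𝒱.card = n}

/-- `H(𝒰) = log N(𝒰)`, as a real number. -/
noncomputable def covHR (𝒰 : Set (Set X)) : ℝ :=
  Real.log (coverN 𝒰)

/-- `H(𝒰) = log N(𝒰)`, as an extended nonnegative real. -/
noncomputable def covH (𝒰 : Set (Set X)) : ℝ≥0∞ :=
  ENNReal.ofReal (Real.log (coverN 𝒰))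

/-- The join `𝒰 ∨ 𝒱 = {U ∩ V : U ∈ 𝒰, V ∈ 𝒱}` of two covers. -/
def covJoin (𝒰 𝒱 : Set (Set X)) : Set (Set X) :=
  Set.image2 (· ∩ ·) 𝒰 𝒱

/-- The preimage cover `f⁻¹(𝒰) = {f⁻¹(U) : U ∈ 𝒰}`. -/
def preimCover (f : X → Y) (𝒰 : Set (Set Y)) : Set (Set X) :=
  (fun U => f ⁻¹' U) '' 𝒰

/-- The iterated join `⋁_{i=0}^{n-1} f⁻ⁱ(𝒰)`. -/
def iterJoin (f : X → X) (𝒰 : Set (Set X)) (n : ℕ) : Set (Set X) :=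
  {W | ∃ u : Fin n → Set X, (∀ i, u i ∈ 𝒰) ∧ W = ⋂ i : Fin n, f^[(i : ℕ)] ⁻¹' u i}

/-- The co-compact entropy of `f` relative to the cover `𝒰`:
`c(f,𝒰) = lim_n (1/n) H(⋁_{i=0}^{n-1} f⁻ⁱ(𝒰))` (realized as a `limsup`). -/
noncomputable def cEntCover (f : X → X) (𝒰 : Set (Set X)) : ℝ≥0∞ :=
  Filter.atTop.limsup fun n : ℕ => covH (iterJoin f 𝒰 n) / (n : ℝ≥0∞)

/-- The co-compact entropy `c(f) = sup_𝒰 c(f,𝒰)` over all co-compact open covers. -/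
noncomputable def cEnt [TopologicalSpace X] (f : X → X) : ℝ≥0∞ :=
  ⨆ (𝒰 : Set (Set X)) (_ : IsCoCompactCover 𝒰), cEntCover f 𝒰

end Defs

section MetricDefs

variable {X : Type*}

/-- `E` is `(n,ε)`-separated for `f` w.r.t. the distance function `d`. -/
def IsNSepSet (d : X → X → ℝ) (f : X → X) (n : ℕ) (ε : ℝ) (E : Set X) : Prop :=
  ∀ x ∈ E, ∀ y ∈ E, x ≠ y → ∃ j < n, ε < d (f^[j] x) (f^[j] y)

/-- `s_n(ε,K,f)`: the maximal cardinality of an `(n,ε)`-separated subset of `K`. -/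
noncomputable def sepCard (d : X → X → ℝ) (f : X → X) (n : ℕ) (ε : ℝ) (K : Set X) : ℝ≥0∞ :=
  ⨆ (E : Finset X) (_ : ↑E ⊆ K ∧ IsNSepSet d f n ε ↑E), (E.card : ℝ≥0∞)

/-- Logarithm on `ℝ≥0∞`, with `elog ⊤ = ⊤`, truncated at `0` below. -/
noncomputable def elog (x : ℝ≥0∞) : ℝ≥0∞ :=
  if x = ⊤ then ⊤ else ENNReal.ofReal (Real.log x.toReal)

/-- `s(ε,K,f) = limsup_n (1/n) log s_n(ε,K,f)`. -/
noncomputable def sepEntEps (d : X → X → ℝ) (f : X → X) (ε : ℝ) (K : Set X) : ℝ≥0∞ :=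
  Filter.atTop.limsup fun n : ℕ => elog (sepCard d f n ε K) / (n : ℝ≥0∞)

/-- `s(K,f) = lim_{ε→0} s(ε,K,f)` (the limit of the monotone family, i.e. the supremum). -/
noncomputable def sepEnt (d : X → X → ℝ) (f : X → X) (K : Set X) : ℝ≥0∞ :=
  ⨆ (ε : ℝ) (_ : 0 < ε), sepEntEps d f ε K

/-- Bowen's entropy `h_d(f) = sup_K s(K,f)`, supremum over compact subsets. -/
noncomputable def bowenEnt [TopologicalSpace X] (d : X → X → ℝ) (f : X → X) : ℝ≥0∞ :=
  ⨆ (K : Set X) (_ : IsCompact K), sepEnt d f K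

/-- The `d`-entropy `h^d(f) = s(X,f)`. -/
noncomputable def dEnt (d : X → X → ℝ) (f : X → X) : ℝ≥0∞ :=
  sepEnt d f Set.univ

/-- A metric space structure on `X` is of compact type (relative to the ambient topology on
`X`) if it extends to a metric on the one-point compactification `OnePoint X` inducing the
topology of `OnePoint X`. -/
def IsCompactTypeMetric [TopologicalSpace X] (m : MetricSpace X) : Prop :=
  ∃ mc : MetricSpace (OnePoint X),
    mc.toUniformSpace.toTopologicalSpace = (inferInstance : TopologicalSpace (OnePoint X)) ∧
    ∀ x y : X, mc.dist ↑x ↑y = m.dist x y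

/-- The extension of `f : X → X` to the one-point compactification, fixing `∞`. -/
def onePointExtend (f : X → X) : OnePoint X → OnePoint X :=
  fun p => Option.rec OnePoint.infty (fun x => (↑(f x) : OnePoint X)) p

end MetricDefs

section MeasureDefs

open MeasureTheory

variable {X : Type*}

/-- A finite Borel partition of `X`. -/
def IsFinBorelPartition [MeasurableSpace X] (P : Finset (Set X)) : Prop :=
  (∀ A ∈ P, MeasurableSet A) ∧ ⋃₀ (P : Set (Set X)) = Set.univ ∧
    ∀ A ∈ P, ∀ B ∈ P, A ≠ B → A ∩ B = ∅

/-- `φ(x) = -x log x` (with `φ(0) = 0`). -/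
noncomputable def phiEnt (x : ℝ) : ℝ := -(x * Real.log x)

/-- `H_μ(⋁_{i=0}^{n-1} f⁻ⁱ𝒜) = Σ_{B} φ(μ(B))`, the sum over the cells of the iterated join of the
partition `P` (cells indexed by tuples of members of `P`; repeated empty cells contribute `0`). -/
noncomputable def partEntSum [MeasurableSpace X] (μ : Measure X) (f : X → X)
    (P : Finset (Set X)) (n : ℕ) : ℝ :=
  ∑ u : Fin n → {A // A ∈ P}, phiEnt ((μ (⋂ i : Fin n, f^[(i : ℕ)] ⁻¹' (u i : Set X))).toReal)

/-- The measure-theoretic (Kolmogorov–Sinai) entropy `h_μ(f)`. -/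
noncomputable def measEnt [MeasurableSpace X] (μ : Measure X) (f : X → X) : ℝ≥0∞ :=
  ⨆ (P : Finset (Set X)) (_ : IsFinBorelPartition P),
    Filter.atTop.limsup fun n : ℕ => ENNReal.ofReal (partEntSum μ f P n) / (n : ℝ≥0∞)

end MeasureDefs

section ChainProof

/-- Every real sequence has a monotone or antitone subsequence. -/
lemma exists_mono_or_anti_subseq (x : ℕ → ℝ) :
    ∃ φ : ℕ → ℕ, StrictMono φ ∧ (Monotone (x ∘ φ) ∨ Antitone (x ∘ φ)) := by
  by_cases h : ∀ N, ∃ n, N ≤ n ∧ ∀ m, n ≤ m → x m ≤ x n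
  · choose g hg1 hg2 using h
    set φ : ℕ → ℕ := fun k => Nat.rec (g 0) (fun _ prev => g (prev + 1)) k with hφ
    have hsucc : ∀ k, φ (k + 1) = g (φ k + 1) := fun k => rfl
    have peak : ∀ k, ∀ m, φ k ≤ m → x m ≤ x (φ k) := by
      intro k
      cases k with
      | zero => exact hg2 0
      | succ k => exact hg2 (φ k + 1)
    have hmono : StrictMono φ := by
      apply strictMono_nat_of_lt_succ
      intro k
      rw [hsucc]
      exact lt_of_lt_of_le (Nat.lt_succ_self _) (hg1 _)
    refine ⟨φ, hmono, Or.inr ?_⟩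
    apply antitone_nat_of_succ_le
    intro k
    exact peak k _ (hmono (Nat.lt_succ_self k)).le
  · push_neg at h
    obtain ⟨N, hN⟩ := h
    have hN' : ∀ n, ∃ m, N ≤ n → (n < m ∧ x n < x m) := by
      intro n
      by_cases hn : N ≤ n
      · obtain ⟨m, hm1, hm2⟩ := hN n hn
        refine ⟨m, fun _ => ⟨?_, hm2⟩⟩
        rcases lt_or_eq_of_le hm1 with h' | h'
        · exact h'
        · subst h'; exact absurd hm2 (lt_irrefl _)
      · exact ⟨0, fun h' => absurd h' hn⟩
    choose g hg using hN'
    set φ : ℕ → ℕ := fun k => Nat.rec N (fun _ prev => g prev) k with hφ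
    have hsucc : ∀ k, φ (k + 1) = g (φ k) := fun k => rfl
    have hinv : ∀ k, N ≤ φ k := by
      intro k
      induction k with
      | zero => exact le_refl N
      | succ k ih => exact le_trans ih (le_of_lt (hg (φ k) ih).1)
    have hmono : StrictMono φ := by
      apply strictMono_nat_of_lt_succ
      intro k
      exact (hg (φ k) (hinv k)).1
    refine ⟨φ, hmono, Or.inl ?_⟩
    apply monotone_nat_of_le_succ
    intro k
    exact (hg (φ k) (hinv k)).2.le

/-- IVT-based exact pullback of a compact interval, oriented version. -/
lemma exact_pullback_Icc_oriented {f : ℝ → ℝ} (hf : Continuous f) {p q a b : ℝ}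
    (hpq : p ≤ q) (hab : a ≤ b) (hfp : f p = a) (hfq : f q = b) :
    ∃ r s, p ≤ r ∧ r ≤ s ∧ s ≤ q ∧ f '' Icc r s = Icc a b := by
  set E : Set ℝ := Icc p q ∩ f ⁻¹' {a} with hE
  have hEne : E.Nonempty := ⟨p, ⟨le_refl p, hpq⟩, hfp⟩
  have hEbdd : BddAbove E := ⟨q, fun x hx => hx.1.2⟩
  have hEclosed : IsClosed E := isClosed_Icc.inter (isClosed_singleton.preimage hf)
  set r : ℝ := sSup E with hr
  have hrE : r ∈ E := hEclosed.csSup_mem hEne hEbdd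
  have hfr : f r = a := hrE.2
  have hpr : p ≤ r := hrE.1.1
  have hrq : r ≤ q := hrE.1.2
  set E2 : Set ℝ := Icc r q ∩ f ⁻¹' {b} with hE2
  have hE2ne : E2.Nonempty := ⟨q, ⟨hrq, le_refl q⟩, hfq⟩
  have hE2bdd : BddBelow E2 := ⟨r, fun x hx => hx.1.1⟩
  have hE2closed : IsClosed E2 := isClosed_Icc.inter (isClosed_singleton.preimage hf)
  set s : ℝ := sInf E2 with hs
  have hsE : s ∈ E2 := hE2closed.csInf_mem hE2ne hE2bdd
  have hfs : f s = b := hsE.2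
  have hrs : r ≤ s := hsE.1.1
  have hsq : s ≤ q := hsE.1.2
  refine ⟨r, s, hpr, hrs, hsq, ?_⟩
  apply Subset.antisymm
  · rintro y ⟨x, hx, rfl⟩
    constructor
    · by_contra hlt
      push_neg at hlt
      have : a ∈ Icc (f x) (f s) := ⟨hlt.le, hfs ▸ hab⟩
      obtain ⟨z, hz, hfz⟩ := intermediate_value_Icc hx.2 (hf.continuousOn) this
      have hzE : z ∈ E := ⟨⟨le_trans hpr (le_trans hx.1 hz.1), le_trans hz.2 hsq⟩, hfz⟩
      have : z ≤ r := le_csSup hEbdd hzE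
      have hxr : x ≤ r := le_trans hz.1 this
      have : x = r := le_antisymm hxr hx.1
      rw [this, hfr] at hlt
      exact absurd hlt (lt_irrefl a)
    · by_contra hlt
      push_neg at hlt
      have : b ∈ Icc (f r) (f x) := ⟨hfr ▸ hab, hlt.le⟩
      obtain ⟨z, hz, hfz⟩ := intermediate_value_Icc hx.1 (hf.continuousOn) this
      have hzE2 : z ∈ E2 := ⟨⟨hz.1, le_trans hz.2 (le_trans hx.2 hsq)⟩, hfz⟩
      have : s ≤ z := csInf_le hE2bdd hzE2
      have hsx : s ≤ x := le_trans this hz.2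
      have : x = s := le_antisymm hx.2 hsx
      rw [this, hfs] at hlt
      exact absurd hlt (lt_irrefl b)
  · have := intermediate_value_Icc hrs (hf.continuousOn)
    rw [hfr, hfs] at this
    exact this

/-- Exact pullback of a compact subinterval of the image of an interval. -/
lemma exact_pullback_Icc {f : ℝ → ℝ} (hf : Continuous f) {J : Set ℝ} (hJ : J.OrdConnected)
    {a b : ℝ} (hab : a ≤ b) (hsub : Icc a b ⊆ f '' J) :
    ∃ r s, r ≤ s ∧ Icc r s ⊆ J ∧ f '' Icc r s = Icc a b := by
  obtain ⟨p, hp, hfp⟩ := hsub ⟨le_refl a, hab⟩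
  obtain ⟨q, hq, hfq⟩ := hsub ⟨hab, le_refl b⟩
  rcases le_total p q with hpq | hqp
  · obtain ⟨r, s, h1, h2, h3, h4⟩ := exact_pullback_Icc_oriented hf hpq hab hfp hfq
    exact ⟨r, s, h2, fun x hx => hJ.out hp hq ⟨le_trans h1 hx.1, le_trans hx.2 h3⟩, h4⟩
  · set g : ℝ → ℝ := fun x => a + b - f x with hg
    have hgc : Continuous g := (continuous_const.sub hf)
    have hgq : g q = a := by simp [hg, hfq]
    have hgp : g p = b := by simp [hg, hfp]
    obtain ⟨r, s, h1, h2, h3, h4⟩ := exact_pullback_Icc_oriented hgc hqp hab hgq hgp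
    refine ⟨r, s, h2, fun x hx => hJ.out hq hp ⟨le_trans h1 hx.1, le_trans hx.2 h3⟩, ?_⟩
    have himg : f '' Icc r s = (fun y => a + b - y) '' (g '' Icc r s) := by
      rw [← Set.image_comp]
      apply Set.image_congr
      intro x _
      simp [hg]
    rw [himg, h4]
    rw [Set.image_const_sub_Icc]
    congr 1 <;> ring

lemma exists_low_seq (S : Set ℝ) (hne : S.Nonempty) :
    ∃ a : ℕ → ℝ, (∀ m, a m ∈ S) ∧ Antitone a ∧ ∀ y ∈ S, ∃ m, a m ≤ y := by
  by_cases hbdd : BddBelow S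
  · by_cases hmem : sInf S ∈ S
    · exact ⟨fun _ => sInf S, fun _ => hmem, antitone_const, fun y hy => ⟨0, csInf_le hbdd hy⟩⟩
    · have hpick : ∀ m : ℕ, ∃ x ∈ S, x < sInf S + 1 / (m + 1) := by
        intro m
        apply Real.lt_sInf_add_pos hne
        positivity
      choose a' ha'S ha'lt using hpick
      set a : ℕ → ℝ := fun m => (Finset.range (m + 1)).inf' (by simp) a' with ha
      have haS : ∀ m, a m ∈ S := by
        intro m
        exact Finset.inf'_mem S
          (fun x hx y hy => by rcases min_choice x y with h | h <;> rw [h] <;> assumption)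
          _ _ _ (fun i _ => ha'S i)
      have hanti : Antitone a := by
        intro i j hij
        exact Finset.inf'_mono (f := a') (Finset.range_subset_range.mpr (Nat.succ_le_succ hij)) Finset.nonempty_range_add_one
      refine ⟨a, haS, hanti, ?_⟩
      intro y hy
      have hygt : sInf S < y := lt_of_le_of_ne (csInf_le hbdd hy) (fun h => hmem (h ▸ hy))
      obtain ⟨m, hm⟩ := exists_nat_one_div_lt (sub_pos.mpr hygt)
      refine ⟨m, ?_⟩
      have h1 : a m ≤ a' m := by
        apply Finset.inf'_le
        simp
      have := ha'lt m
      push_cast at hm ⊢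
      nlinarith [hm, this, h1]
  · have hpick : ∀ m : ℕ, ∃ x ∈ S, x < -(m : ℝ) := by
      intro m
      rw [not_bddBelow_iff] at hbdd
      obtain ⟨x, hx, hlt⟩ := hbdd (-(m : ℝ))
      exact ⟨x, hx, hlt⟩
    choose a' ha'S ha'lt using hpick
    set a : ℕ → ℝ := fun m => (Finset.range (m + 1)).inf' (by simp) a' with ha
    have haS : ∀ m, a m ∈ S := by
      intro m
      exact Finset.inf'_mem S
        (fun x hx y hy => by rcases min_choice x y with h | h <;> rw [h] <;> assumption)
        _ _ _ (fun i _ => ha'S i)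
    have hanti : Antitone a := by
      intro i j hij
      exact Finset.inf'_mono (f := a') (Finset.range_subset_range.mpr (Nat.succ_le_succ hij)) Finset.nonempty_range_add_one
    refine ⟨a, haS, hanti, ?_⟩
    intro y hy
    obtain ⟨m, hm⟩ := exists_nat_ge (-y)
    refine ⟨m, ?_⟩
    have h1 : a m ≤ a' m := by
      apply Finset.inf'_le
      simp
    have := ha'lt m
    linarith

lemma exists_high_seq (S : Set ℝ) (hne : S.Nonempty) :
    ∃ b : ℕ → ℝ, (∀ m, b m ∈ S) ∧ Monotone b ∧ ∀ y ∈ S, ∃ m, y ≤ b m := by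
  obtain ⟨a, haS, hanti, hcov⟩ := exists_low_seq (Neg.neg '' S) (hne.image _)
  refine ⟨fun m => -a m, fun m => ?_, fun i j hij => by simpa using hanti hij, fun y hy => ?_⟩
  · obtain ⟨t, ht, h⟩ := haS m
    show -a m ∈ S
    rw [← h, neg_neg]; exact ht
  · obtain ⟨m, hm⟩ := hcov (-y) ⟨y, hy, rfl⟩
    refine ⟨m, ?_⟩
    show y ≤ -a m
    linarith

lemma exists_cover_seqs (L : Set ℝ) {p0 q0 : ℝ} (hp0 : p0 ∈ L) (hq0 : q0 ∈ L) :
    ∃ a b : ℕ → ℝ, (∀ m, a m ∈ L) ∧ (∀ m, b m ∈ L) ∧ Antitone a ∧ Monotone b ∧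
      (∀ m, a m ≤ p0) ∧ (∀ m, q0 ≤ b m) ∧ (∀ y ∈ L, ∃ m, a m ≤ y ∧ y ≤ b m) := by
  obtain ⟨a, haS, hanti, hacov⟩ := exists_low_seq L ⟨p0, hp0⟩
  obtain ⟨b, hbS, hmono, hbcov⟩ := exists_high_seq L ⟨q0, hq0⟩
  refine ⟨fun m => min (a m) p0, fun m => max (b m) q0, ?_, ?_, ?_, ?_, ?_, ?_, ?_⟩
  · intro m; show min (a m) p0 ∈ L
    rcases min_choice (a m) p0 with h | h <;> rw [h] <;> [exact haS m; exact hp0]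
  · intro m; show max (b m) q0 ∈ L
    rcases max_choice (b m) q0 with h | h <;> rw [h] <;> [exact hbS m; exact hq0]
  · exact fun i j hij => min_le_min (hanti hij) (le_refl _)
  · exact fun i j hij => max_le_max (hmono hij) (le_refl _)
  · exact fun m => min_le_right _ _
  · exact fun m => le_max_right _ _
  · intro y hy
    obtain ⟨m1, hm1⟩ := hacov y hy
    obtain ⟨m2, hm2⟩ := hbcov y hy
    refine ⟨max m1 m2, ?_, ?_⟩
    · exact le_trans (min_le_left _ _) (le_trans (hanti (le_max_left m1 m2)) hm1)
    · exact le_trans hm2 (le_trans (hmono (le_max_right m1 m2)) (le_max_left _ _))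

lemma chain_nondeg {f : ℝ → ℝ} (hf : Continuous f) {r s : ℕ → ℝ} {p p0 q0 : ℝ}
    (hr : Tendsto r atTop (𝓝 p)) (hs : Tendsto s atTop (𝓝 p))
    (hmem : ∀ j : ℕ, p0 ∈ f '' Icc (r j) (s j) ∧ q0 ∈ f '' Icc (r j) (s j))
    (hlt : p0 < q0) : False := by
  have hcont := Metric.continuousAt_iff.mp (hf.continuousAt (x := p))
  obtain ⟨δ, hδpos, hδ⟩ := hcont ((q0 - p0) / 2) (by linarith)
  have h1 : ∀ᶠ j in atTop, dist (r j) p < δ := (Metric.tendsto_nhds.mp hr) δ hδpos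
  have h2 : ∀ᶠ j in atTop, dist (s j) p < δ := (Metric.tendsto_nhds.mp hs) δ hδpos
  obtain ⟨j, hj1, hj2⟩ := (h1.and h2).exists
  obtain ⟨⟨u, hu, hfu⟩, ⟨v, hv, hfv⟩⟩ := hmem j
  rw [Real.dist_eq, abs_lt] at hj1 hj2
  have hud : dist u p < δ := by
    rw [Real.dist_eq, abs_lt]
    obtain ⟨hu1, hu2⟩ := hu
    constructor <;> linarith
  have hvd : dist v p < δ := by
    rw [Real.dist_eq, abs_lt]
    obtain ⟨hv1, hv2⟩ := hv
    constructor <;> linarith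
  have h3 := hδ hud
  have h4 := hδ hvd
  rw [hfu, Real.dist_eq, abs_lt] at h3
  rw [hfv, Real.dist_eq, abs_lt] at h4
  linarith

lemma chain_surj_core {f : ℝ → ℝ} (hf : Continuous f) (hfib : ∀ y, IsCompact (f ⁻¹' {y}))
    {r s a b : ℕ → ℝ} {A B p0 q0 : ℝ}
    (hrm : Monotone r ∨ Antitone r) (hsm : Monotone s ∨ Antitone s)
    (hrB : ∀ j, r j ≤ B) (hAs : ∀ j, A ≤ s j)
    (himg : ∀ j, f '' Icc (r j) (s j) = Icc (a j) (b j))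
    (hap : ∀ j, a j ≤ p0) (hqb : ∀ j, q0 ≤ b j) (hpq : p0 < q0)
    {y : ℝ} {M : ℕ} (hy : ∀ j, M ≤ j → a j ≤ y ∧ y ≤ b j) :
    ∃ x, (∃ N, ∀ j, N ≤ j → r j ≤ x ∧ x ≤ s j) ∧ f x = y := by
  -- preimages of y in each interval (shifted index)
  have hex : ∀ l : ℕ, ∃ x, (r (M + l) ≤ x ∧ x ≤ s (M + l)) ∧ f x = y := by
    intro l
    have hmem : y ∈ Icc (a (M + l)) (b (M + l)) := hy _ (Nat.le_add_right _ _)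
    rw [← himg (M + l)] at hmem
    obtain ⟨x, hx, hfx⟩ := hmem
    exact ⟨x, ⟨hx.1, hx.2⟩, hfx⟩
  choose x hx1 hx2 using hex
  have hxfib : ∀ l, x l ∈ f ⁻¹' {y} := fun l => hx2 l
  obtain ⟨xs, hxsfib, ψ, hψ, hψt⟩ := (hfib y).tendsto_subseq hxfib
  have hfxs : f xs = y := hxsfib
  have hMψ : ∀ j : ℕ, ∀ᶠ l in atTop, j ≤ M + ψ l := by
    intro j
    filter_upwards [eventually_ge_atTop j] with l hl
    exact le_trans hl (le_trans (hψ.le_apply) (Nat.le_add_left _ _))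
  -- membership facts about p0, q0 in the images
  have hmemPQ : ∀ j : ℕ, p0 ∈ f '' Icc (r j) (s j) ∧ q0 ∈ f '' Icc (r j) (s j) := by
    intro j
    rw [himg j]
    exact ⟨⟨hap j, le_trans hpq.le (hqb j)⟩, ⟨le_trans (hap j) hpq.le, hqb j⟩⟩
  rcases hrm with hrmono | hranti
  · -- r monotone
    have hxsr : ∀ j, r j ≤ xs := by
      intro j
      refine ge_of_tendsto hψt ?_
      filter_upwards [hMψ j] with l hl
      exact le_trans (hrmono hl) (hx1 (ψ l)).1
    rcases hsm with hsmono | hsanti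
    · -- r mono, s mono
      by_cases hPs : ∃ j, xs ≤ s j
      · obtain ⟨j0, hj0⟩ := hPs
        exact ⟨xs, ⟨j0, fun j hj => ⟨hxsr j, le_trans hj0 (hsmono hj)⟩⟩, hfxs⟩
      · push_neg at hPs
        have hsub : BddAbove (Set.range s) := ⟨xs, by rintro _ ⟨j, rfl⟩; exact (hPs j).le⟩
        have hst := tendsto_atTop_ciSup hsmono hsub
        have hsup : (⨆ j, s j) = xs := by
          apply le_antisymm
          · exact ciSup_le fun j => (hPs j).le
          · refine le_of_tendsto hψt ?_
            filter_upwards with l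
            exact le_trans (hx1 (ψ l)).2 (le_ciSup hsub (M + ψ l))
        rw [hsup] at hst
        have hrub : BddAbove (Set.range r) := ⟨B, by rintro _ ⟨j, rfl⟩; exact hrB j⟩
        have hrsup_le : (⨆ j, r j) ≤ xs := ciSup_le fun j => hxsr j
        rcases eq_or_lt_of_le hrsup_le with heq | hltc
        · exfalso
          have hrt := tendsto_atTop_ciSup hrmono hrub
          rw [heq] at hrt
          exact chain_nondeg hf hrt hst hmemPQ hpq
        · -- pick l with x (ψ l) > ⨆ r
          have hev : ∀ᶠ l in atTop, (⨆ j, r j) < x (ψ l) :=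
            hψt.eventually (eventually_gt_nhds hltc)
          obtain ⟨l, hl⟩ := hev.exists
          have hxlt : x (ψ l) < xs := lt_of_le_of_lt (hx1 (ψ l)).2 (hPs (M + ψ l))
          rw [← hsup] at hxlt
          obtain ⟨j0, hj0⟩ : ∃ j0, x (ψ l) < s j0 := by
            by_contra hcon
            push_neg at hcon
            exact absurd (ciSup_le hcon) (not_le.mpr hxlt)
          refine ⟨x (ψ l), ⟨j0, fun j hj => ⟨?_, ?_⟩⟩, hx2 (ψ l)⟩
          · exact le_trans (le_ciSup hrub j) hl.le
          · exact le_trans hj0.le (hsmono hj)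
    · -- r mono, s anti
      have hxss : ∀ j, xs ≤ s j := by
        intro j
        refine le_of_tendsto hψt ?_
        filter_upwards [hMψ j] with l hl
        exact le_trans (hx1 (ψ l)).2 (hsanti hl)
      exact ⟨xs, ⟨0, fun j _ => ⟨hxsr j, hxss j⟩⟩, hfxs⟩
  · -- r antitone
    rcases hsm with hsmono | hsanti
    · -- r anti, s mono : expanding, easy
      refine ⟨x 0, ⟨M, fun j hj => ⟨?_, ?_⟩⟩, hx2 0⟩
      · exact le_trans (hranti (by omega : M ≤ j)) (by simpa using (hx1 0).1)
      · exact le_trans (by simpa using (hx1 0).2) (hsmono (by omega : M ≤ j))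
    · -- r anti, s anti
      have hxss : ∀ j, xs ≤ s j := by
        intro j
        refine le_of_tendsto hψt ?_
        filter_upwards [hMψ j] with l hl
        exact le_trans (hx1 (ψ l)).2 (hsanti hl)
      by_cases hPr : ∃ j, r j ≤ xs
      · obtain ⟨j0, hj0⟩ := hPr
        exact ⟨xs, ⟨j0, fun j hj => ⟨le_trans (hranti hj) hj0, hxss j⟩⟩, hfxs⟩
      · push_neg at hPr
        have hrlb : BddBelow (Set.range r) := ⟨xs, by rintro _ ⟨j, rfl⟩; exact (hPr j).le⟩
        have hrt := tendsto_atTop_ciInf hranti hrlb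
        have hinf : (⨅ j, r j) = xs := by
          apply le_antisymm
          · refine ge_of_tendsto hψt ?_
            filter_upwards with l
            exact le_trans (ciInf_le hrlb (M + ψ l)) (hx1 (ψ l)).1
          · exact le_ciInf fun j => (hPr j).le
        rw [hinf] at hrt
        have hslb : BddBelow (Set.range s) := ⟨A, by rintro _ ⟨j, rfl⟩; exact hAs j⟩
        have hxs_le_inf : xs ≤ ⨅ j, s j := le_ciInf fun j => hxss j
        rcases eq_or_lt_of_le hxs_le_inf with heq | hltc
        · exfalso
          have hst := tendsto_atTop_ciInf hsanti hslb
          rw [← heq] at hst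
          exact chain_nondeg hf hrt hst hmemPQ hpq
        · have hev : ∀ᶠ l in atTop, x (ψ l) < ⨅ j, s j :=
            hψt.eventually (eventually_lt_nhds hltc)
          obtain ⟨l, hl⟩ := hev.exists
          refine ⟨x (ψ l), ⟨M + ψ l, fun j hj => ⟨?_, ?_⟩⟩, hx2 (ψ l)⟩
          · exact le_trans (hranti hj) (hx1 (ψ l)).1
          · exact le_trans hl.le (ciInf_le hslb j)

/-- Main pullback lemma: an interval inside the image of an interval under a continuous map
with compact fibers can be realized exactly as the image of a subinterval. -/
lemma interval_pullback {f : ℝ → ℝ} (hf : Continuous f) (hfib : ∀ y, IsCompact (f ⁻¹' {y}))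
    {J L : Set ℝ} (hJ : J.OrdConnected) (hL : L.OrdConnected) (hLne : L.Nonempty)
    (hsub : L ⊆ f '' J) :
    ∃ K : Set ℝ, K.Nonempty ∧ K.OrdConnected ∧ K ⊆ J ∧ f '' K = L := by
  by_cases htriv : ∃ p0 ∈ L, ∃ q0 ∈ L, p0 < q0
  · obtain ⟨p0, hp0, q0, hq0, hpq⟩ := htriv
    obtain ⟨a, b, haL, hbL, hanti, hmono, hap, hqb, hcov⟩ := exists_cover_seqs L hp0 hq0
    -- each [a m, b m] ⊆ L ⊆ f '' J
    have hIccL : ∀ m, Icc (a m) (b m) ⊆ L := fun m => hL.out (haL m) (hbL m)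
    have hIcc : ∀ m, Icc (a m) (b m) ⊆ f '' J := fun m => (hIccL m).trans hsub
    have hab : ∀ m, a m ≤ b m := fun m => le_trans (hap m) (le_trans hpq.le (hqb m))
    have hstep : ∀ m, ∃ r s, r ≤ s ∧ Icc r s ⊆ J ∧ f '' Icc r s = Icc (a m) (b m) :=
      fun m => exact_pullback_Icc hf hJ (hab m) (hIcc m)
    choose r s hrs hsubJ himg using hstep
    -- bound through the fiber of p0
    have hfibne : ∀ m, ∃ t, t ∈ Icc (r m) (s m) ∧ f t = p0 := by
      intro m
      have : p0 ∈ Icc (a m) (b m) := ⟨hap m, le_trans hpq.le (hqb m)⟩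
      rw [← himg m] at this
      obtain ⟨t, ht, hft⟩ := this
      exact ⟨t, ht, hft⟩
    have hfibc := hfib p0
    obtain ⟨A, hA⟩ := hfibc.bddBelow
    obtain ⟨B, hB⟩ := hfibc.bddAbove
    have hrB : ∀ m, r m ≤ B := by
      intro m
      obtain ⟨t, ht, hft⟩ := hfibne m
      exact le_trans ht.1 (hB hft)
    have hAs : ∀ m, A ≤ s m := by
      intro m
      obtain ⟨t, ht, hft⟩ := hfibne m
      exact le_trans (hA hft) ht.2
    -- extract monotone subsequences
    obtain ⟨φ1, hφ1, hr1⟩ := exists_mono_or_anti_subseq r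
    obtain ⟨φ2, hφ2, hs2⟩ := exists_mono_or_anti_subseq (s ∘ φ1)
    set φ : ℕ → ℕ := φ1 ∘ φ2 with hφdef
    have hφ : StrictMono φ := hφ1.comp hφ2
    have hrm : Monotone (r ∘ φ) ∨ Antitone (r ∘ φ) := by
      rcases hr1 with h | h
      · exact Or.inl (h.comp hφ2.monotone)
      · exact Or.inr (h.comp_monotone hφ2.monotone)
    have hsm : Monotone (s ∘ φ) ∨ Antitone (s ∘ φ) := hs2
    set K : Set ℝ := {x | ∃ N, ∀ j, N ≤ j → r (φ j) ≤ x ∧ x ≤ s (φ j)} with hK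
    have hsurj : ∀ y ∈ L, ∃ x ∈ K, f x = y := by
      intro y hy
      obtain ⟨m, hm1, hm2⟩ := hcov y hy
      have hy' : ∀ j, m ≤ j → a (φ j) ≤ y ∧ y ≤ b (φ j) := by
        intro j hj
        have hφj : m ≤ φ j := le_trans hj (hφ.le_apply)
        exact ⟨le_trans (hanti hφj) hm1, le_trans hm2 (hmono hφj)⟩
      obtain ⟨x, hxK, hfx⟩ := chain_surj_core hf hfib (a := a ∘ φ) (b := b ∘ φ)
        hrm hsm (fun j => hrB (φ j)) (fun j => hAs (φ j))
        (fun j => himg (φ j)) (fun j => hap (φ j)) (fun j => hqb (φ j)) hpq hy'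
      exact ⟨x, hxK, hfx⟩
    obtain ⟨x0, hx0K, _⟩ := hsurj p0 hp0
    refine ⟨K, ⟨x0, hx0K⟩, ?_, ?_, ?_⟩
    · constructor
      rintro u ⟨Nu, hNu⟩ v ⟨Nv, hNv⟩ z hz
      refine ⟨max Nu Nv, fun j hj => ⟨?_, ?_⟩⟩
      · exact le_trans (hNu j (le_trans (le_max_left _ _) hj)).1 hz.1
      · exact le_trans hz.2 (hNv j (le_trans (le_max_right _ _) hj)).2
    · rintro z ⟨N, hN⟩
      exact hsubJ (φ N) ⟨(hN N (le_refl N)).1, (hN N (le_refl N)).2⟩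
    · apply Subset.antisymm
      · rintro _ ⟨z, ⟨N, hN⟩, rfl⟩
        have hz : z ∈ Icc (r (φ N)) (s (φ N)) := ⟨(hN N le_rfl).1, (hN N le_rfl).2⟩
        have : f z ∈ Icc (a (φ N)) (b (φ N)) := by
          rw [← himg (φ N)]; exact ⟨z, hz, rfl⟩
        exact hIccL (φ N) this
      · intro y hy
        obtain ⟨x, hxK, hfx⟩ := hsurj y hy
        exact ⟨x, hxK, hfx⟩
  · -- L is a singleton
    push_neg at htriv
    obtain ⟨c, hc⟩ := hLne
    obtain ⟨x, hxJ, hfx⟩ := hsub hc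
    refine ⟨{x}, ⟨x, rfl⟩, ordConnected_singleton, by simpa using hxJ, ?_⟩
    rw [Set.image_singleton, hfx]
    apply Subset.antisymm (by simpa using hc)
    intro y hy
    have : y = c := le_antisymm (htriv c hc y hy) (htriv y hy c hc)
    simp [this]

end ChainProof

/-- If `(J 0, …, J (n-1))` is a chain of nonempty intervals for the perfect map
`f : ℝ → ℝ` (i.e. `J i ⊆ f(J (i-1))` for `1 ≤ i ≤ n-1`), then there is a nonempty interval
`K ⊆ J 0` with `f^[n-1](K) = J (n-1)` and `f^[i](K) ⊆ J i` for all `0 ≤ i ≤ n-1`. -/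
theorem chain_of_intervals_pullback (f : ℝ → ℝ) (hf : IsPerfectMap f) (n : ℕ) (hn : 1 ≤ n)
    (J : ℕ → Set ℝ) (hJne : ∀ i < n, (J i).Nonempty) (hJint : ∀ i < n, (J i).OrdConnected)
    (hchain : ∀ i, 1 ≤ i → i < n → J i ⊆ f '' J (i - 1)) :
    ∃ K : Set ℝ, K.Nonempty ∧ K.OrdConnected ∧ K ⊆ J 0 ∧
      f^[n - 1] '' K = J (n - 1) ∧ ∀ i < n, f^[i] '' K ⊆ J i := by
  have main : ∀ n, 1 ≤ n → ∀ J : ℕ → Set ℝ, (∀ i < n, (J i).Nonempty) →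
      (∀ i < n, (J i).OrdConnected) → (∀ i, 1 ≤ i → i < n → J i ⊆ f '' J (i - 1)) →
      ∃ K : Set ℝ, K.Nonempty ∧ K.OrdConnected ∧ K ⊆ J 0 ∧
        f^[n - 1] '' K = J (n - 1) ∧ ∀ i < n, f^[i] '' K ⊆ J i := by
    intro n hn
    induction n, hn using Nat.le_induction with
    | base =>
      intro J h1 h2 _
      refine ⟨J 0, h1 0 one_pos, h2 0 one_pos, Subset.rfl, by simp, ?_⟩
      intro i hi
      interval_cases i
      simp
    | succ n hn ih =>
      intro J h1 h2 h3
      obtain ⟨K', hK'ne, hK'oc, hK'sub, hK'img, hK'all⟩ :=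
        ih (fun i => J (i + 1)) (fun i hi => h1 (i + 1) (by omega))
          (fun i hi => h2 (i + 1) (by omega))
          (fun i hi1 hi2 => by
            show J (i + 1) ⊆ f '' J (i - 1 + 1)
            have he : i - 1 + 1 = i := by omega
            rw [he]
            have := h3 (i + 1) (by omega) (by omega)
            simpa using this)
      have hK'J1 : K' ⊆ f '' J 0 := hK'sub.trans (by simpa using h3 1 le_rfl (by omega))
      obtain ⟨K, hKne, hKoc, hKsub, hKimg⟩ :=
        interval_pullback hf.1 hf.2.2 (h2 0 (by omega)) hK'oc hK'ne hK'J1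
      have hiter : ∀ k : ℕ, f^[k + 1] '' K = f^[k] '' K' := by
        intro k
        rw [Function.iterate_succ, Set.image_comp, hKimg]
      refine ⟨K, hKne, hKoc, hKsub, ?_, ?_⟩
      · have he1 : n + 1 - 1 = (n - 1) + 1 := by omega
        rw [he1, hiter (n - 1), hK'img]
      · intro i hi
        cases i with
        | zero => simpa using hKsub
        | succ k =>
          rw [hiter k]
          exact hK'all k (by omega)
  exact main n hn J hJne hJint hchain
end

section
/- Let f : ℝ → ℝ be a perfect mapping. If fⁿ has a p-horseshoe for some n ≥ 1, then the co-compact entropy satisfies c(f) ≥ (log p)/n. -/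
open Set Filter Topology ENNReal

/-- `(J 1, …, J p)` is a `p`-horseshoe for `g : ℝ → ℝ` : the `J i` are pairwise disjoint closed
non-degenerate bounded intervals with `J 1 ∪ ⋯ ∪ J p ⊆ g(J i)` for every `i`. -/
def IsPHorseshoe (g : ℝ → ℝ) (p : ℕ) (J : Fin p → Set ℝ) : Prop :=
  (∀ i, ∃ a b : ℝ, a < b ∧ J i = Set.Icc a b) ∧
  (∀ i j, i ≠ j → Disjoint (J i) (J j)) ∧
  (∀ i, (⋃ j, J j) ⊆ g '' (J i))

lemma horseshoe_itinerary {g : ℝ → ℝ} {p : ℕ} {J : Fin p → Set ℝ}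
    (hne : ∀ i, (J i).Nonempty)
    (hsub : ∀ i, (⋃ j, J j) ⊆ g '' (J i)) (k : ℕ) :
    ∀ w : Fin (k+1) → Fin p, ∃ x : ℝ, ∀ i, g^[(i:ℕ)] x ∈ J (w i) := by
  induction k with
  | zero =>
    intro w
    obtain ⟨x, hx⟩ := hne (w 0)
    refine ⟨x, fun i => ?_⟩
    have hi : i = 0 := by omega
    subst hi; simpa using hx
  | succ k ih =>
    intro w
    obtain ⟨y, hy⟩ := ih (fun i => w i.succ)
    have hy0 : y ∈ ⋃ j, J j := Set.mem_iUnion.2 ⟨_, by simpa using hy 0⟩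
    obtain ⟨x, hx, hgx⟩ := hsub (w 0) hy0
    refine ⟨x, fun i => ?_⟩
    rcases Fin.eq_zero_or_eq_succ i with h | ⟨j, rfl⟩
    · subst h; simpa using hx
    · have hj := hy j
      rw [Fin.val_succ, Function.iterate_succ_apply, hgx]
      exact hj

/-- If `f : ℝ → ℝ` is perfect and `f^[n]` has a `p`-horseshoe for some `n ≥ 1`,
then `c(f) ≥ (log p)/n`. -/
theorem cEnt_ge_of_horseshoe (f : ℝ → ℝ) (hf : IsPerfectMap f) (n : ℕ) (hn : 1 ≤ n)
    (p : ℕ) (J : Fin p → Set ℝ) (hJ : IsPHorseshoe (f^[n]) p J) :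
    ENNReal.ofReal (Real.log p / n) ≤ cEnt f :=  by
  classical
  obtain ⟨hIcc, hdisj, hcov⟩ := hJ
  rcases le_or_gt (p : ℝ) 1 with hp | hp
  · have h0 : Real.log p ≤ 0 := Real.log_nonpos (by positivity) hp
    have hle : Real.log p / n ≤ 0 := div_nonpos_of_nonpos_of_nonneg h0 (by positivity)
    simp [ENNReal.ofReal_eq_zero.mpr hle]
  have hlogp : 0 ≤ Real.log p := Real.log_nonneg hp.le
  have hp1 : 1 < p := by exact_mod_cast hp
  have hn0 : 0 < n := hn
  -- basic facts about the intervals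
  have hJcl : ∀ i, IsCompact (J i) ∧ IsClosed (J i) := by
    intro i
    obtain ⟨a, b, hab, hiJ⟩ := hIcc i
    rw [hiJ]; exact ⟨isCompact_Icc, isClosed_Icc⟩
  have hJne : ∀ i, (J i).Nonempty := by
    intro i
    obtain ⟨a, b, hab, hiJ⟩ := hIcc i
    rw [hiJ]; exact Set.nonempty_Icc.2 hab.le
  -- the co-compact cover
  set K : Fin p → Set ℝ := fun l => ⋃ j, (if j = l then (∅ : Set ℝ) else J j) with hK
  set V : Fin p → Set ℝ := fun l => (K l)ᶜ with hV
  have hKc : ∀ l, IsCompact (K l) := by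
    intro l
    apply isCompact_iUnion
    intro j
    split_ifs
    · exact isCompact_empty
    · exact (hJcl j).1
  have hKcl : ∀ l, IsClosed (K l) := by
    intro l
    apply isClosed_iUnion_of_finite
    intro j
    split_ifs
    · exact isClosed_empty
    · exact (hJcl j).2
  have hVJ : ∀ l j (x : ℝ), x ∈ V l → x ∈ J j → j = l := by
    intro l j x hxV hxJ
    by_contra hjl
    exact hxV (Set.mem_iUnion.2 ⟨j, by simp [hjl, hxJ]⟩)
  have hVcov : ∀ x : ℝ, ∃ l, x ∈ V l := by
    intro x
    by_cases h : ∃ i, x ∈ J i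
    · obtain ⟨i, hi⟩ := h
      refine ⟨i, fun hxK => ?_⟩
      obtain ⟨s, ⟨j, rfl⟩, hxs⟩ := hxK
      by_cases hji : j = i
      · simp [hji] at hxs
      · simp only [if_neg hji] at hxs
        exact Set.disjoint_left.1 (hdisj j i hji) hxs hi
    · push_neg at h
      refine ⟨⟨0, by omega⟩, fun hxK => ?_⟩
      obtain ⟨s, ⟨j, rfl⟩, hxs⟩ := hxK
      by_cases hj : j = (⟨0, by omega⟩ : Fin p)
      · simp [hj] at hxs
      · simp only [if_neg hj] at hxs
        exact h j hxs
  set 𝒰 : Set (Set ℝ) := Set.range V with h𝒰def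
  have h𝒰 : IsCoCompactCover 𝒰 := by
    constructor
    · rintro U ⟨l, rfl⟩
      refine ⟨(hKcl l).isOpen_compl, ?_⟩
      show IsCompact ((K l)ᶜᶜ)
      rw [compl_compl]
      exact hKc l
    · apply Set.eq_univ_of_forall
      intro x
      obtain ⟨l, hl⟩ := hVcov x
      exact ⟨V l, ⟨l, rfl⟩, hl⟩
  -- itinerary points for g = f^[n]
  have hitin : ∀ (k : ℕ) (w : Fin (k+1) → Fin p), ∃ x : ℝ,
      ∀ i, f^[n * (i : ℕ)] x ∈ J (w i) := by
    intro k w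
    obtain ⟨x, hx⟩ := horseshoe_itinerary hJne hcov k w
    exact ⟨x, fun i => by rw [Function.iterate_mul]; exact hx i⟩
  -- the key counting bound
  have key : ∀ k : ℕ, p ^ (k+1) ≤ coverN (iterJoin f 𝒰 (n * (k+1))) := by
    intro k
    set m := n * (k+1) with hm
    -- the defining set is nonempty: the full iterated join is a finite cover
    have hne_S : ∃ c, ∃ 𝒱 : Finset (Set ℝ), ↑𝒱 ⊆ iterJoin f 𝒰 m ∧
        ⋃₀ (𝒱 : Set (Set ℝ)) = Set.univ ∧ 𝒱.card = c := by
      refine ⟨_, Finset.image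
        (fun u : Fin m → Fin p => ⋂ i : Fin m, f^[(i : ℕ)] ⁻¹' V (u i)) Finset.univ,
        ?_, ?_, rfl⟩
      · rintro W hW
        simp only [Finset.coe_image, Set.mem_image] at hW
        obtain ⟨u, _, rfl⟩ := hW
        exact ⟨fun i => V (u i), fun i => ⟨u i, rfl⟩, rfl⟩
      · apply Set.eq_univ_of_forall
        intro x
        choose l hl using fun i : Fin m => hVcov (f^[(i : ℕ)] x)
        refine ⟨⋂ i : Fin m, f^[(i : ℕ)] ⁻¹' V (l i), ?_, ?_⟩
        · simp only [Finset.coe_image, Set.mem_image]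
          exact ⟨l, by simp, rfl⟩
        · exact Set.mem_iInter.2 fun i => hl i
    -- every finite subcover has at least p^(k+1) members
    have hlb : ∀ c ∈ {c | ∃ 𝒱 : Finset (Set ℝ), ↑𝒱 ⊆ iterJoin f 𝒰 m ∧
        ⋃₀ (𝒱 : Set (Set ℝ)) = Set.univ ∧ 𝒱.card = c}, p ^ (k+1) ≤ c := by
      rintro c ⟨𝒱, h𝒱sub, h𝒱cov, rfl⟩
      choose x hxit using hitin k
      have hxcov : ∀ w : Fin (k+1) → Fin p, ∃ W ∈ 𝒱, x w ∈ W := by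
        intro w
        have : x w ∈ ⋃₀ (𝒱 : Set (Set ℝ)) := h𝒱cov ▸ Set.mem_univ _
        obtain ⟨W, hW, hxW⟩ := this
        exact ⟨W, hW, hxW⟩
      choose W hWmem hxW using hxcov
      have hinj : Function.Injective W := by
        intro w w' hww'
        obtain ⟨u, hu, hWeq⟩ := h𝒱sub (hWmem w)
        choose v hv using fun j => hu j
        have hmem : ∀ (ww : Fin (k+1) → Fin p), W ww = W w →
            ∀ i : Fin (k+1), ∀ hlt : n * (i : ℕ) < m,
            ww i = v ⟨n * (i : ℕ), hlt⟩ := by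
          intro ww hWW i hlt
          have hx1 : f^[n * (i : ℕ)] (x ww) ∈ J (ww i) := hxit ww i
          have hx2 : x ww ∈ ⋂ j : Fin m, f^[(j : ℕ)] ⁻¹' u j := by
            rw [← hWeq, ← hWW]; exact hxW ww
          have hx3 : f^[n * (i : ℕ)] (x ww) ∈ u ⟨n * (i : ℕ), hlt⟩ :=
            Set.mem_iInter.1 hx2 ⟨n * (i : ℕ), hlt⟩
          rw [← hv ⟨n * (i : ℕ), hlt⟩] at hx3
          exact hVJ _ _ _ hx3 hx1
        funext i
        have hlt : n * (i : ℕ) < m := by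
          rw [hm]
          exact mul_lt_mul_of_pos_left i.isLt hn0
        have h1 := hmem w rfl i hlt
        have h2 := hmem w' hww'.symm i hlt
        rw [h2, ← h1]
      have hcard : p ^ (k+1) ≤ 𝒱.card := by
        have := Finset.card_le_card_of_injOn (s := (Finset.univ : Finset (Fin (k+1) → Fin p)))
          W (fun w _ => hWmem w) (fun a _ b _ h => hinj h)
        simpa [Fintype.card_fun] using this
      exact hcard
    exact le_csInf hne_S hlb
  -- now pass to the limsup
  have hfreq : ∃ᶠ m in Filter.atTop, ENNReal.ofReal (Real.log p / n) ≤
      covH (iterJoin f 𝒰 m) / (m : ℝ≥0∞) := by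
    rw [Filter.frequently_atTop]
    intro a
    refine ⟨n * (a+1), le_trans (Nat.le_succ a) (Nat.le_mul_of_pos_left _ hn0), ?_⟩
    set N := coverN (iterJoin f 𝒰 (n * (a+1))) with hN
    have hNge : p ^ (a+1) ≤ N := key a
    have hNpos : 0 < N := lt_of_lt_of_le (pow_pos (by omega) _) hNge
    have hlog : (a+1 : ℝ) * Real.log p ≤ Real.log N := by
      have h1 : ((p : ℝ)) ^ (a+1) ≤ (N : ℝ) := by exact_mod_cast hNge
      have h2 := Real.log_le_log (by positivity) h1
      rw [Real.log_pow] at h2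
      push_cast at h2 ⊢
      linarith
    rw [covH, ← hN]
    rw [ENNReal.le_div_iff_mul_le (Or.inl (Nat.cast_ne_zero.2 (by positivity))) (Or.inl (ENNReal.natCast_ne_top _))]
    rw [← ENNReal.ofReal_natCast, ← ENNReal.ofReal_mul (by positivity)]
    apply ENNReal.ofReal_le_ofReal
    have hnne : (n : ℝ) ≠ 0 := by positivity
    have heq : Real.log p / n * ((n * (a+1) : ℕ) : ℝ) = (a+1 : ℝ) * Real.log p := by
      push_cast
      field_simp
    rw [heq]
    exact hlog
  have hlim : ENNReal.ofReal (Real.log p / n) ≤ cEntCover f 𝒰 :=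
    Filter.le_limsup_of_frequently_le hfreq
  exact le_trans hlim (le_iSup₂ (f := fun 𝒰 (_ : IsCoCompactCover 𝒰) => cEntCover f 𝒰) 𝒰 h𝒰)
end
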